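/- Let R be a commutative local ring, A an R-algebra that is finitely generated as an R-module, m a maximal two-sided ideal of A, and e an idempotent for (A, m) (that is, e² = e, e ∉ m, and e ∈ m' for every maximal two-sided ideal m' ≠ m of A). Then for every two-sided ideal I of A: I ⊆ m if and only if e ∉ I. -/

import Mathlib

/-- A subset `I` of a ring `B` is a two-sided ideal: it contains `0`, is closed under
addition, and is closed under multiplication by arbitrary ring elements on both sides. -/
def IsTwoSidedIdealSet {B : Type*} [Ring B] (I : Set B) : Prop :=
  (0 : B) ∈ I ∧ (∀ a ∈ I, ∀ b ∈ I, a + b ∈ I) ∧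
    (∀ (x : B), ∀ a ∈ I, x * a ∈ I) ∧ (∀ (x : B), ∀ a ∈ I, a * x ∈ I)

/-- A subset `I` of a ring `B` is a maximal two-sided ideal: it is a proper two-sided
ideal which is maximal among proper two-sided ideals. -/
def IsMaximalTwoSidedIdeal {B : Type*} [Ring B] (I : Set B) : Prop :=
  IsTwoSidedIdealSet I ∧ I ≠ Set.univ ∧
    ∀ J : Set B, IsTwoSidedIdealSet J → J ≠ Set.univ → I ⊆ J → J = I

/-!
If `I ⊄ m`, write `1 = i + x` with `i ∈ I`, `x ∈ m`. Then `e * x` lies in every maximal two-sided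
ideal (in `m` through `x`, in the others through `e`). For `A` finite over the local ring `R`
such an element lies in the Jacobson radical, so `u * (1 - e * x) = 1` for some `u`, and
`e = u * (1 - e * x) * e = u * (e * i * e) ∈ I`.

Why the Jacobson radical `J` of `A` contains the intersection of the maximal two-sided ideals:
by Nakayama the maximal ideal of `R` kills every simple `A`-module, so `A ⧸ J` is a finite module
over the residue field, hence Artinian, hence semisimple. Given `y`, let `T` be the two-sided ideal
it generates; a complement of the image of `T` in `A ⧸ J` gives `t ∈ T` with `a ≡ a * t` mod `J`
for all `a ∈ T`. Then `1 - t` lies in the two-sided ideal `U = {w | T * w ⊆ J}`, and a maximal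
two-sided ideal containing `U` and `y` would contain `t` and `1 - t`; so `1 ∈ U`, i.e. `y ∈ J`.
-/

namespace IsTwoSidedIdealSet

variable {A : Type*} [Ring A] {I : Set A}

lemma add_mem (hI : IsTwoSidedIdealSet I) {a b : A} (ha : a ∈ I) (hb : b ∈ I) : a + b ∈ I :=
  hI.2.1 a ha b hb

lemma mul_mem_left (hI : IsTwoSidedIdealSet I) (x : A) {a : A} (ha : a ∈ I) : x * a ∈ I :=
  hI.2.2.1 x a ha

lemma mul_mem_right (hI : IsTwoSidedIdealSet I) (x : A) {a : A} (ha : a ∈ I) : a * x ∈ I :=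
  hI.2.2.2 x a ha

def toTwoSidedIdeal (hI : IsTwoSidedIdealSet I) : TwoSidedIdeal A :=
  .mk' I hI.1 hI.add_mem (fun {x} hx => by simpa using hI.mul_mem_left (-1) hx)
    (hI.mul_mem_left _) (hI.mul_mem_right _)

@[simp]
lemma mem_toTwoSidedIdeal (hI : IsTwoSidedIdealSet I) {x : A} :
    x ∈ hI.toTwoSidedIdeal ↔ x ∈ I :=
  TwoSidedIdeal.mem_mk' ..

lemma eq_univ_of_one_mem (hI : IsTwoSidedIdealSet I) (h1 : (1 : A) ∈ I) : I = Set.univ :=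
  Set.eq_univ_of_forall fun x => by simpa using hI.mul_mem_left x h1

lemma sUnion_of_isChain {c : Set (Set A)} (hc : IsChain (· ⊆ ·) c) (hne : c.Nonempty)
    (h : ∀ J ∈ c, IsTwoSidedIdealSet J) : IsTwoSidedIdealSet (⋃₀ c) := by
  obtain ⟨J₀, hJ₀⟩ := hne
  refine ⟨⟨J₀, hJ₀, (h J₀ hJ₀).1⟩, ?_, ?_, ?_⟩
  · rintro a ⟨Ja, hJa, ha⟩ b ⟨Jb, hJb, hb⟩
    rcases hc.total hJa hJb with hab | hba
    · exact ⟨Jb, hJb, (h Jb hJb).add_mem (hab ha) hb⟩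
    · exact ⟨Ja, hJa, (h Ja hJa).add_mem ha (hba hb)⟩
  · rintro x a ⟨J, hJ, ha⟩
    exact ⟨J, hJ, (h J hJ).mul_mem_left x ha⟩
  · rintro x a ⟨J, hJ, ha⟩
    exact ⟨J, hJ, (h J hJ).mul_mem_right x ha⟩

lemma exists_isMaximalTwoSidedIdeal_superset (hI : IsTwoSidedIdealSet I) (h1 : (1 : A) ∉ I) :
    ∃ M : Set A, IsMaximalTwoSidedIdeal M ∧ I ⊆ M := by
  obtain ⟨M, hIM, hM⟩ := zorn_subset_nonempty {J : Set A | IsTwoSidedIdealSet J ∧ (1 : A) ∉ J}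
    (fun c hcS hc hne => ⟨⋃₀ c, ⟨sUnion_of_isChain hc hne fun J hJ => (hcS hJ).1,
      fun ⟨J, hJ, h1J⟩ => (hcS hJ).2 h1J⟩, fun _ => Set.subset_sUnion_of_mem⟩) I ⟨hI, h1⟩
  refine ⟨M, ⟨hM.prop.1, fun h => hM.prop.2 (h ▸ trivial), fun J hJ hJu hMJ => ?_⟩, hIM⟩
  exact (hM.eq_of_subset ⟨hJ, fun h1J => hJu (hJ.eq_univ_of_one_mem h1J)⟩ hMJ).symm

end IsTwoSidedIdealSet

lemma IsMaximalTwoSidedIdeal.exists_add_eq_one {A : Type*} [Ring A] {m I : Set A}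
    (hm : IsMaximalTwoSidedIdeal m) (hI : IsTwoSidedIdealSet I) (hIm : ¬I ⊆ m) :
    ∃ i ∈ I, ∃ x ∈ m, i + x = 1 := by
  set K := hI.toTwoSidedIdeal ⊔ hm.1.toTwoSidedIdeal
  have hmK : m ⊆ K := fun x hx => TwoSidedIdeal.mem_sup_right (by simpa using hx)
  have hK : (K : Set A) = Set.univ := by
    by_contra hK
    have hKm := hm.2.2 K ⟨K.zero_mem, fun _ ha _ hb => K.add_mem ha hb,
      fun x _ ha => K.mul_mem_left x _ ha, fun x _ ha => K.mul_mem_right _ x ha⟩ hK hmK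
    exact hIm (hKm ▸ fun x hx => TwoSidedIdeal.mem_sup_left (by simpa using hx))
  obtain ⟨i, hi, x, hx, hix⟩ := TwoSidedIdeal.mem_sup.mp (hK ▸ Set.mem_univ (1 : A))
  exact ⟨i, by simpa using hi, x, by simpa using hx, hix⟩

section Semisimple

variable {A : Type*} [Ring A]

lemma TwoSidedIdeal.exists_mem_forall_sub_mul_mem {N : Ideal A} [IsSemisimpleModule A (A ⧸ N)]
    (T : TwoSidedIdeal A) : ∃ t ∈ T, ∀ a ∈ T, a - a * t ∈ N := by
  obtain ⟨C, hC⟩ := exists_isCompl (Submodule.map N.mkQ T.asIdeal)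
  have h1 : N.mkQ (1 : A) ∈ Submodule.map N.mkQ T.asIdeal ⊔ C := hC.sup_eq_top ▸ Submodule.mem_top
  obtain ⟨_, ⟨t, htT, rfl⟩, c, hc, htc⟩ := Submodule.mem_sup.mp h1
  refine ⟨t, htT, fun a ha => ?_⟩
  have hmk : N.mkQ (a - a * t) = a • c := by
    rw [eq_sub_of_add_eq' htc, smul_sub, ← map_smul, ← map_smul, ← map_sub, smul_eq_mul,
      smul_eq_mul, mul_one]
  have hmem : N.mkQ (a - a * t) ∈ Submodule.map N.mkQ T.asIdeal ⊓ C :=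
    ⟨⟨_, TwoSidedIdeal.mem_asIdeal.mpr (T.sub_mem ha (T.mul_mem_right a t ha)), rfl⟩,
      hmk ▸ C.smul_mem a hc⟩
  rwa [hC.inf_eq_bot, Submodule.mem_bot, Submodule.mkQ_apply,
    Submodule.Quotient.mk_eq_zero] at hmem

lemma mem_of_forall_isMaximalTwoSidedIdeal (N : Ideal A) [N.IsTwoSided]
    [IsSemisimpleModule A (A ⧸ N)] {y : A}
    (hy : ∀ M : Set A, IsMaximalTwoSidedIdeal M → y ∈ M) : y ∈ N := by
  set T := TwoSidedIdeal.span {y}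
  obtain ⟨t, htT, ht⟩ := T.exists_mem_forall_sub_mul_mem (N := N)
  set U : Set A := {w | ∀ a ∈ T, a * w ∈ N}
  have hU : IsTwoSidedIdealSet U :=
    ⟨fun a _ => by simp,
      fun u hu v hv a ha => by simpa [mul_add] using N.add_mem (hu a ha) (hv a ha),
      fun x u hu a ha => by simpa [mul_assoc] using hu _ (T.mul_mem_right a x ha),
      fun x u hu a ha => by simpa [mul_assoc] using N.mul_mem_right x (hu a ha)⟩
  by_contra hyN
  have h1U : (1 : A) ∉ U := fun h => hyN (by simpa using h y (TwoSidedIdeal.subset_span rfl))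
  obtain ⟨M, hM, hUM⟩ := hU.exists_isMaximalTwoSidedIdeal_superset h1U
  have htM : t ∈ M := by
    simpa using (TwoSidedIdeal.span_le (I := hM.1.toTwoSidedIdeal)).mpr (by simpa using hy M hM) htT
  have h1t : 1 - t ∈ M := hUM fun a ha => by simpa [mul_sub] using ht a ha
  exact hM.2.1 (hM.1.eq_univ_of_one_mem (by simpa using hM.1.add_mem htM h1t))

end Semisimple

section FiniteAlgebra

variable {R A M : Type*} [CommRing R] [Ring A] [Algebra R A]
  [AddCommGroup M] [Module A M] [Module R M] [IsScalarTower R A M]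

lemma smul_eq_zero_of_mem_jacobson [IsSimpleModule A M] [Module.Finite R M] {r : R}
    (hr : r ∈ Ring.jacobson R) (m : M) : r • m = 0 := by
  rcases LinearMap.bijective_or_eq_zero (r • LinearMap.id : M →ₗ[A] M) with h | h
  · have : Nontrivial M := IsSimpleModule.nontrivial A M
    have htop : (⊤ : Submodule R M) ≤ Ring.jacobson R • ⊤ := fun m' _ => by
      obtain ⟨m, rfl⟩ := h.2 m'
      exact Submodule.smul_mem_smul hr trivial
    exact absurd (Module.Finite.fg_top.eq_bot_of_le_jacobson_smul htop) top_ne_bot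
  · exact LinearMap.congr_fun h m

lemma smul_mem_jacobson_of_mem_jacobson [Module.Finite R M] {r : R} (hr : r ∈ Ring.jacobson R)
    (m : M) : r • m ∈ Module.jacobson A M := by
  refine Submodule.mem_sInf.mpr fun (N : Submodule A M) hN => ?_
  have : IsSimpleModule A (M ⧸ N) := (isSimpleModule_iff_isCoatom (R := A)).mpr hN
  have : Module.Finite R (M ⧸ N) :=
    Module.Finite.of_surjective (N.mkQ.restrictScalars R) N.mkQ_surjective
  rw [← Submodule.Quotient.mk_eq_zero, Submodule.Quotient.mk_smul]
  exact smul_eq_zero_of_mem_jacobson (A := A) hr _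

end FiniteAlgebra

lemma isArtinian_of_isTorsionBySet {R M : Type*} [CommRing R] [AddCommGroup M] [Module R M]
    [Module.Finite R M] (I : Ideal R) [IsArtinianRing (R ⧸ I)]
    (hM : Module.IsTorsionBySet R M I) : IsArtinian R M := by
  let : Module (R ⧸ I) M := Module.IsTorsionBySet.module (I := I) hM
  have : Module.Finite (R ⧸ I) M := Module.Finite.of_restrictScalars_finite R _ _
  exact isArtinian_of_surjective_algebraMap (Ideal.Quotient.mk_surjective (I := I))

lemma isSemisimpleModule_quotient_jacobson (R A : Type*) [CommRing R] [IsLocalRing R] [Ring A]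
    [Algebra R A] [Module.Finite R A] : IsSemisimpleModule A (A ⧸ Ring.jacobson A) := by
  have : Module.Finite R (A ⧸ Ring.jacobson A) :=
    Module.Finite.of_surjective ((Ring.jacobson A).mkQ.restrictScalars R)
      (Ring.jacobson A).mkQ_surjective
  have hM : Module.IsTorsionBySet R (A ⧸ Ring.jacobson A) (IsLocalRing.maximalIdeal R) := by
    rintro x ⟨r, hr⟩
    induction x using Submodule.Quotient.induction_on with | _ a => ?_
    rw [← Submodule.Quotient.mk_smul, Submodule.Quotient.mk_eq_zero]
    exact smul_mem_jacobson_of_mem_jacobson ((IsLocalRing.ringJacobson_eq_maximalIdeal R).ge hr) a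
  let := Ideal.Quotient.field (IsLocalRing.maximalIdeal R)
  have := isArtinian_of_tower R (S := A) (isArtinian_of_isTorsionBySet _ hM)
  exact (IsArtinian.isSemisimpleModule_iff_jacobson A _).mpr (Module.jacobson_quotient_jacobson A A)

lemma exists_mul_one_sub_eq_one_of_mem_jacobson {A : Type*} [Ring A] {y : A}
    (hy : y ∈ Ring.jacobson A) : ∃ u : A, u * (1 - y) = 1 := by
  obtain ⟨u, hu⟩ := Ideal.mem_jacobson_iff.mp (Ideal.jacobson_bot (R := A) ▸ hy) (-1)
  exact ⟨u, by simpa [mul_sub, sub_eq_zero, neg_add_eq_sub] using hu⟩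

/-- Let `R` be a commutative local ring, `A` an `R`-algebra which is finitely generated
as an `R`-module, `m` a maximal two-sided ideal of `A`, and `e` an idempotent for
`(A, m)` (i.e. `e² = e`, `e ∉ m`, and `e ∈ m'` for every maximal two-sided ideal
`m' ≠ m`). Then for every two-sided ideal `I` of `A`: `I ⊆ m` if and only if `e ∉ I`. -/
theorem subset_maximal_iff_idempotent_not_mem {R A : Type*} [CommRing R] [IsLocalRing R]
    [Ring A] [Algebra R A] [Module.Finite R A]
    (m : Set A) (hm : IsMaximalTwoSidedIdeal m)
    (e : A) (he : e * e = e) (hem : e ∉ m)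
    (he' : ∀ m' : Set A, IsMaximalTwoSidedIdeal m' → m' ≠ m → e ∈ m')
    (I : Set A) (hI : IsTwoSidedIdealSet I) :
    I ⊆ m ↔ e ∉ I := by
  refine ⟨fun hIm heI => hem (hIm heI), fun heI => by_contra fun hIm => heI ?_⟩
  obtain ⟨i, hi, x, hx, hix⟩ := hm.exists_add_eq_one hI hIm
  have := isSemisimpleModule_quotient_jacobson R A
  have hex : e * x ∈ Ring.jacobson A := mem_of_forall_isMaximalTwoSidedIdeal _ fun m' hm' => by
    by_cases h : m' = m
    · exact h ▸ hm.1.mul_mem_left e hx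
    · exact hm'.1.mul_mem_right x (he' m' hm' h)
  obtain ⟨u, hu⟩ := exists_mul_one_sub_eq_one_of_mem_jacobson hex
  have hei : e * i * e = (1 - e * x) * e := by
    rw [eq_sub_of_add_eq hix, mul_sub, mul_one, sub_mul, sub_mul, he, one_mul]
  have he_eq : e = u * (e * i * e) := by rw [hei, ← mul_assoc, hu, one_mul]
  exact he_eq ▸ hI.mul_mem_left u (hI.mul_mem_right e (hI.mul_mem_left e hi))
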